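/- With G_μ as above (Huffman tree plus disjoint return paths), the Shannon entropy of a uniform random walk of length n(d+1) on G_μ starting at the root equals exactly n·H(μ), where H(μ) = Σ_σ μ(σ) log₂(1/μ(σ)). -/

import Mathlib

open Finset
open scoped Classical

/-- Vertices of `G_μ`: tree nodes (addresses, i.e. prefixes of codewords) on the left,
fresh return-path vertices `(σ, j)` on the right. The root is `Sum.inl []`. -/
abbrev GVert (S : Type*) := List Bool ⊕ (S × ℕ)

/-- Edge relation of `G_μ`: the Huffman tree of `μ` (given by a prefix-free code `c`
with codeword lengths `ℓ`), edges directed from the root towards the leaves, together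
with vertex-disjoint directed return paths of length `d + 1 - ℓ σ` from each leaf
back to the root. -/
def GEdge {S : Type*} (c : S → List Bool) (ℓ : S → ℕ) (d : ℕ) :
    GVert S → GVert S → Prop
  | .inl p, .inl q =>
      (∃ b, q = p ++ [b] ∧ ∃ σ, q <+: c σ) ∨ (q = [] ∧ ∃ σ, p = c σ ∧ d = ℓ σ)
  | .inl p, .inr (σ, j) => p = c σ ∧ j = 1 ∧ 1 ≤ d - ℓ σ
  | .inr (σ, j), .inr (σ', j') => σ' = σ ∧ j' = j + 1 ∧ 1 ≤ j ∧ j + 1 ≤ d - ℓ σ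
  | .inr (σ, j), .inl p => p = [] ∧ 1 ≤ j ∧ j = d - ℓ σ

/-- Out-degree of a vertex of `G_μ`. -/
noncomputable def outdeg {S : Type*} (c : S → List Bool) (ℓ : S → ℕ) (d : ℕ)
    (v : GVert S) : ℕ :=
  Nat.card {w : GVert S // GEdge c ℓ d v w}

/-- Probability that the uniform random walk on `G_μ` follows a given trajectory. -/
noncomputable def walkProb {S : Type*} (c : S → List Bool) (ℓ : S → ℕ) (d : ℕ) {m : ℕ}
    (f : Fin (m + 1) → GVert S) : ℝ :=
  ∏ i : Fin m, (if GEdge c ℓ d (f i.castSucc) (f i.succ)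
    then ((outdeg c ℓ d (f i.castSucc) : ℝ))⁻¹ else 0)


/-! ### Auxiliary development -/

section Kraft
variable {S : Type*} [Fintype S] (μ : S → ℝ) (c : S → List Bool)

noncomputable def Sm (p : List Bool) : ℝ := ∑ σ : S, if p <+: c σ then μ σ else 0

variable {μ c}

lemma ext_pref {p : List Bool} {l : List Bool} (h : p <+: l) (hlt : p.length < l.length) :
    ∃ b, p ++ [b] <+: l := by
  refine ⟨l.get ⟨p.length, hlt⟩, ?_⟩
  have hp : p = l.take p.length := List.prefix_iff_eq_take.mp h
  have h2 : l.take p.length ++ [l.get ⟨p.length, hlt⟩] = l.take (p.length + 1) := by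
    simpa [List.concat_eq_append] using List.take_concat_get l p.length hlt
  rw [← hp] at h2
  rw [h2]
  exact List.take_prefix _ l

lemma pref_of_ext {p : List Bool} {b : Bool} {l : List Bool} (h : p ++ [b] <+: l) :
    p <+: l := (List.prefix_append p [b]).trans h

lemma not_both_ext {p : List Bool} {l : List Bool} (h0 : p ++ [false] <+: l)
    (h1 : p ++ [true] <+: l) : False := by
  rcases List.prefix_or_prefix_of_prefix h0 h1 with h | h <;>
  · rw [List.prefix_append_right_inj] at h
    have := h.eq_of_length (by simp)
    simp at this

lemma Sm_split {ℓ : S → ℕ} (hlen : ∀ σ, (c σ).length = ℓ σ) (p : List Bool)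
    (hnc : ∀ σ, p ≠ c σ) :
    Sm μ c p = Sm μ c (p ++ [false]) + Sm μ c (p ++ [true]) := by
  unfold Sm
  rw [← Finset.sum_add_distrib]
  refine Finset.sum_congr rfl fun σ _ => ?_
  by_cases h : p <+: c σ
  · have hlt : p.length < (c σ).length := by
      rcases lt_or_eq_of_le h.length_le with h' | h'
      · exact h'
      · exact absurd (List.IsPrefix.eq_of_length h h') (hnc σ)
    obtain ⟨b, hb⟩ := ext_pref h hlt
    cases b
    · have : ¬ (p ++ [true] <+: c σ) := fun h' => not_both_ext hb h'
      simp [h, hb, this]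
    · have : ¬ (p ++ [false] <+: c σ) := fun h' => not_both_ext h' hb
      simp [h, hb, this]
  · have h0 : ¬ (p ++ [false] <+: c σ) := fun h' => h (pref_of_ext h')
    have h1 : ¬ (p ++ [true] <+: c σ) := fun h' => h (pref_of_ext h')
    simp [h, h0, h1]

lemma Sm_codeword (hcinj : Function.Injective c)
    (hpf : ∀ σ τ, σ ≠ τ → ¬(c σ <+: c τ)) (σ : S) :
    Sm μ c (c σ) = μ σ := by
  unfold Sm
  rw [Finset.sum_eq_single σ]
  · simp
  · intro τ _ hτ
    rw [if_neg]
    exact fun h => hpf σ τ (fun e => hτ e.symm) h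
  · simp


variable {ℓ : S → ℕ} {d : ℕ}

lemma Sm_nonneg (hμ : ∀ σ, μ σ = ((2:ℝ) ^ ℓ σ)⁻¹) (p : List Bool) : 0 ≤ Sm μ c p := by
  unfold Sm
  refine Finset.sum_nonneg fun σ _ => ?_
  split <;> [rw [hμ σ]; skip] <;> positivity

lemma Sm_zero {p : List Bool} (h : ¬ ∃ σ, p <+: c σ) : Sm μ c p = (0:ℝ) := by
  unfold Sm
  push_neg at h
  exact Finset.sum_eq_zero fun σ _ => if_neg (h σ)

lemma Sm_le (hμ : ∀ σ, μ σ = ((2:ℝ) ^ ℓ σ)⁻¹) (hlen : ∀ σ, (c σ).length = ℓ σ)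
    (hcinj : Function.Injective c) (hpf : ∀ σ τ, σ ≠ τ → ¬(c σ <+: c τ)) (hd : ∀ σ, ℓ σ ≤ d) :
    ∀ (k : ℕ) (p : List Bool), d - p.length ≤ k → Sm μ c p ≤ ((2:ℝ) ^ p.length)⁻¹ := by
  intro k
  induction k with
  | zero =>
    intro p hk
    by_cases hc : ∃ σ, p = c σ
    · obtain ⟨σ, rfl⟩ := hc
      rw [Sm_codeword hcinj hpf σ, hμ σ, hlen σ]
    · by_cases hpr : ∃ σ, p <+: c σ
      · obtain ⟨σ, hσ⟩ := hpr
        have h1 : p.length < (c σ).length := by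
          rcases lt_or_eq_of_le hσ.length_le with h' | h'
          · exact h'
          · exact absurd (List.IsPrefix.eq_of_length hσ h') (fun e => hc ⟨σ, e⟩)
        have := hd σ; have := hlen σ
        omega
      · rw [Sm_zero hpr]; positivity
  | succ k ih =>
    intro p hk
    by_cases hc : ∃ σ, p = c σ
    · obtain ⟨σ, rfl⟩ := hc
      rw [Sm_codeword hcinj hpf σ, hμ σ, hlen σ]
    · by_cases hpr : ∃ σ, p <+: c σ
      · obtain ⟨σ, hσ⟩ := hpr
        have h1 : p.length < (c σ).length := by
          rcases lt_or_eq_of_le hσ.length_le with h' | h'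
          · exact h'
          · exact absurd (List.IsPrefix.eq_of_length hσ h') (fun e => hc ⟨σ, e⟩)
        have hpd : p.length < d := lt_of_lt_of_le h1 ((hlen σ) ▸ hd σ)
        have h0 := ih (p ++ [false]) (by simp; omega)
        have h1' := ih (p ++ [true]) (by simp; omega)
        rw [Sm_split hlen p (fun σ e => hc ⟨σ, e⟩)]
        simp only [List.length_append, List.length_singleton] at h0 h1'
        have e2 : ((2:ℝ) ^ (p.length + 1))⁻¹ = ((2:ℝ) ^ p.length)⁻¹ / 2 := by
          rw [pow_succ]; field_simp
        rw [e2] at h0 h1'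
        linarith
      · rw [Sm_zero hpr]; positivity

lemma Sm_eq (hμ : ∀ σ, μ σ = ((2:ℝ) ^ ℓ σ)⁻¹) (hlen : ∀ σ, (c σ).length = ℓ σ)
    (hcinj : Function.Injective c) (hpf : ∀ σ τ, σ ≠ τ → ¬(c σ <+: c τ)) (hd : ∀ σ, ℓ σ ≤ d)
    (hsum : ∑ σ : S, μ σ = 1) :
    ∀ p : List Bool, (∃ σ, p <+: c σ) → Sm μ c p = ((2:ℝ) ^ p.length)⁻¹ := by
  intro p
  induction p using List.reverseRecOn with
  | nil =>
    intro _
    have : Sm μ c ([] : List Bool) = ∑ σ : S, μ σ := by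
      unfold Sm; exact Finset.sum_congr rfl fun σ _ => if_pos (List.nil_prefix)
    simp [this, hsum]
  | append_singleton q b ih =>
    intro hpr
    obtain ⟨σ, hσ⟩ := hpr
    have hq : q <+: c σ := pref_of_ext hσ
    have hqnc : ∀ τ, q ≠ c τ := by
      intro τ e
      have hne : τ ≠ σ := by
        intro e'; subst e'
        have := hσ.length_le; simp [← e] at this
      exact hpf τ σ hne (e ▸ hq)
    have hsp := Sm_split (μ := μ) hlen q hqnc
    have hiq := ih ⟨σ, hq⟩
    have h0 := Sm_le hμ hlen hcinj hpf hd d (q ++ [false]) (by omega)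
    have h1 := Sm_le hμ hlen hcinj hpf hd d (q ++ [true]) (by omega)
    simp only [List.length_append, List.length_singleton] at h0 h1 ⊢
    have e2 : ((2:ℝ) ^ (q.length + 1))⁻¹ = ((2:ℝ) ^ q.length)⁻¹ / 2 := by
      rw [pow_succ]; field_simp
    rw [e2] at h0 h1 ⊢
    cases b <;> linarith



lemma complete (hμ : ∀ σ, μ σ = ((2:ℝ) ^ ℓ σ)⁻¹) (hlen : ∀ σ, (c σ).length = ℓ σ)
    (hcinj : Function.Injective c)
    (hpf : ∀ σ τ, σ ≠ τ → ¬(c σ <+: c τ)) (hd : ∀ σ, ℓ σ ≤ d)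
    (hsum : ∑ σ : S, μ σ = 1) {p : List Bool} {σ : S}
    (hσ : p <+: c σ) (hlt : p.length < (c σ).length) (b : Bool) :
    ∃ τ, p ++ [b] <+: c τ := by
  by_contra hno
  push_neg at hno
  have hz : Sm μ c (p ++ [b]) = 0 := Sm_zero (by push_neg; exact hno)
  have hnc : ∀ τ, p ≠ c τ := by
    intro τ e
    have hne : τ ≠ σ := by intro e'; subst e'; rw [e] at hlt; exact absurd hlt (lt_irrefl _)
    exact hpf τ σ hne (e ▸ hσ)
  have hsp := Sm_split (μ := μ) hlen p hnc
  have heq := Sm_eq hμ hlen hcinj hpf hd hsum p ⟨σ, hσ⟩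
  have h0 := Sm_le hμ hlen hcinj hpf hd d (p ++ [false]) (by omega)
  have h1 := Sm_le hμ hlen hcinj hpf hd d (p ++ [true]) (by omega)
  simp only [List.length_append, List.length_singleton] at h0 h1
  have e2 : ((2:ℝ) ^ (p.length + 1))⁻¹ = ((2:ℝ) ^ p.length)⁻¹ / 2 := by
    rw [pow_succ]; field_simp
  have hpos : (0:ℝ) < ((2:ℝ) ^ p.length)⁻¹ := by positivity
  rw [e2] at h0 h1
  cases b <;> rw [hz] at hsp <;> linarith

end Kraft


section Outdeg
variable {S : Type*} [Fintype S] {μ : S → ℝ} {c : S → List Bool} {ℓ : S → ℕ} {d : ℕ}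

lemma outdeg_eq_ncard (v : GVert S) :
    outdeg c ℓ d v = {w | GEdge c ℓ d v w}.ncard := by
  rw [outdeg, ← Nat.card_coe_set_eq]
  rfl

lemma codeword_of_proper {p : List Bool} {σ : S}
    (hpf : ∀ σ τ, σ ≠ τ → ¬(c σ <+: c τ))
    (hσ : p <+: c σ) (hlt : p.length < (c σ).length) : ∀ τ, p ≠ c τ := by
  intro τ e
  have hne : τ ≠ σ := by
    intro e'; subst e'; rw [e] at hlt; exact absurd hlt (lt_irrefl _)
  exact hpf τ σ hne (e ▸ hσ)

lemma outdeg_internal (hμ : ∀ σ, μ σ = ((2:ℝ) ^ ℓ σ)⁻¹) (hlen : ∀ σ, (c σ).length = ℓ σ)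
    (hcinj : Function.Injective c) (hpf : ∀ σ τ, σ ≠ τ → ¬(c σ <+: c τ))
    (hd : ∀ σ, ℓ σ ≤ d) (hsum : ∑ σ : S, μ σ = 1)
    {p : List Bool} {σ : S} (hσ : p <+: c σ) (hlt : p.length < (c σ).length) :
    outdeg c ℓ d (.inl p) = 2 := by
  have hnc : ∀ τ, p ≠ c τ := codeword_of_proper hpf hσ hlt
  have hset : {w : GVert S | GEdge c ℓ d (.inl p) w} =
      {.inl (p ++ [false]), .inl (p ++ [true])} := by
    ext w
    cases w with
    | inl q =>
      simp only [GEdge, Set.mem_setOf_eq, Set.mem_insert_iff, Set.mem_singleton_iff]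
      constructor
      · rintro (⟨b, rfl, hq⟩ | ⟨rfl, τ, hcτ, _⟩)
        · cases b
          · left; rfl
          · right; rfl
        · exact absurd hcτ (hnc τ)
      · rintro (h | h) <;> rw [Sum.inl.injEq] at h <;> subst h
        · exact Or.inl ⟨false, rfl, complete hμ hlen hcinj hpf hd hsum hσ hlt false⟩
        · exact Or.inl ⟨true, rfl, complete hμ hlen hcinj hpf hd hsum hσ hlt true⟩
    | inr x =>
      obtain ⟨τ, j⟩ := x
      simp only [GEdge, Set.mem_setOf_eq, Set.mem_insert_iff, Set.mem_singleton_iff]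
      constructor
      · rintro ⟨hcτ, -⟩; exact absurd hcτ (hnc τ)
      · rintro (h | h) <;> exact absurd h (by simp)
  rw [outdeg_eq_ncard, hset, Set.ncard_pair]
  simp only [ne_eq, Sum.inl.injEq]
  intro h
  have := List.append_cancel_left h
  simp at this

lemma outdeg_leaf (hd : ∀ σ, ℓ σ ≤ d) (hcinj : Function.Injective c) (hlen : ∀ σ, (c σ).length = ℓ σ)
    (hpf : ∀ σ τ, σ ≠ τ → ¬(c σ <+: c τ)) (σ : S) :
    outdeg c ℓ d (.inl (c σ)) = 1 := by
  have hchild : ∀ (q : List Bool) b, q = c σ ++ [b] → ¬ ∃ τ, q <+: c τ := by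
    rintro q b rfl ⟨τ, hτ⟩
    have hne : σ ≠ τ := by
      intro e; subst e
      have := hτ.length_le; simp at this
    exact hpf σ τ hne (pref_of_ext hτ)
  by_cases hde : ℓ σ = d
  · have hset : {w : GVert S | GEdge c ℓ d (.inl (c σ)) w} = {.inl []} := by
      ext w
      cases w with
      | inl q =>
        simp only [GEdge, Set.mem_setOf_eq, Set.mem_singleton_iff, Sum.inl.injEq]
        constructor
        · rintro (⟨b, hb, hq⟩ | ⟨rfl, -⟩)
          · exact absurd hq (hchild q b hb)
          · rfl
        · rintro rfl
          exact Or.inr ⟨rfl, σ, rfl, hde.symm⟩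
      | inr x =>
        obtain ⟨τ, j⟩ := x
        simp only [GEdge, Set.mem_setOf_eq, Set.mem_singleton_iff]
        constructor
        · rintro ⟨hcτ, -, h1⟩
          have : τ = σ := hcinj hcτ.symm
          subst this; omega
        · intro h; exact absurd h (by simp)
    rw [outdeg_eq_ncard, hset, Set.ncard_singleton]
  · have hlt : ℓ σ < d := lt_of_le_of_ne (hd σ) hde
    have hset : {w : GVert S | GEdge c ℓ d (.inl (c σ)) w} = {.inr (σ, 1)} := by
      ext w
      cases w with
      | inl q =>
        simp only [GEdge, Set.mem_setOf_eq, Set.mem_singleton_iff]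
        constructor
        · rintro (⟨b, hb, hq⟩ | ⟨rfl, τ, hcτ, hdτ⟩)
          · exact absurd hq (hchild q b hb)
          · have : τ = σ := hcinj hcτ.symm
            subst this; omega
        · intro h; exact absurd h (by simp)
      | inr x =>
        obtain ⟨τ, j⟩ := x
        simp only [GEdge, Set.mem_setOf_eq, Set.mem_singleton_iff, Sum.inr.injEq, Prod.mk.injEq]
        constructor
        · rintro ⟨hcτ, rfl, -⟩
          exact ⟨hcinj hcτ.symm, rfl⟩
        · rintro ⟨rfl, rfl⟩
          exact ⟨rfl, rfl, by omega⟩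
    rw [outdeg_eq_ncard, hset, Set.ncard_singleton]

lemma outdeg_ret {σ : S} {j : ℕ} (h1 : 1 ≤ j) (h2 : j ≤ d - ℓ σ) :
    outdeg c ℓ d (.inr (σ, j)) = 1 := by
  by_cases hj : j = d - ℓ σ
  · have hset : {w : GVert S | GEdge c ℓ d (.inr (σ, j)) w} = {.inl []} := by
      ext w
      cases w with
      | inl q =>
        simp only [GEdge, Set.mem_setOf_eq, Set.mem_singleton_iff, Sum.inl.injEq]
        constructor
        · rintro ⟨rfl, -⟩; rfl
        · rintro rfl; exact ⟨rfl, h1, hj⟩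
      | inr x =>
        obtain ⟨τ, j'⟩ := x
        simp only [GEdge, Set.mem_setOf_eq, Set.mem_singleton_iff]
        constructor
        · rintro ⟨rfl, rfl, -, h4⟩; omega
        · intro h; exact absurd h (by simp)
    rw [outdeg_eq_ncard, hset, Set.ncard_singleton]
  · have hset : {w : GVert S | GEdge c ℓ d (.inr (σ, j)) w} = {.inr (σ, j + 1)} := by
      ext w
      cases w with
      | inl q =>
        simp only [GEdge, Set.mem_setOf_eq, Set.mem_singleton_iff]
        constructor
        · rintro ⟨rfl, -, h4⟩; omega
        · intro h; exact absurd h (by simp)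
      | inr x =>
        obtain ⟨τ, j'⟩ := x
        simp only [GEdge, Set.mem_setOf_eq, Set.mem_singleton_iff, Sum.inr.injEq, Prod.mk.injEq]
        constructor
        · rintro ⟨rfl, rfl, -⟩; exact ⟨rfl, rfl⟩
        · rintro ⟨rfl, rfl⟩; exact ⟨rfl, rfl, h1, by omega⟩
    rw [outdeg_eq_ncard, hset, Set.ncard_singleton]

end Outdeg


section Traj
variable {S : Type*} [Fintype S] [Nonempty S] {μ : S → ℝ} {c : S → List Bool} {ℓ : S → ℕ} {d : ℕ}

/-- Position within one segment of the canonical trajectory reading symbol `σ`. -/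
def segTraj (c : S → List Bool) (ℓ : S → ℕ) (σ : S) (r : ℕ) : GVert S :=
  if r ≤ ℓ σ then .inl ((c σ).take r) else .inr (σ, r - ℓ σ)

/-- The canonical trajectory reading the symbol stream `s`. -/
def traj (c : S → List Bool) (ℓ : S → ℕ) (d : ℕ) (s : ℕ → S) (k : ℕ) : GVert S :=
  segTraj c ℓ (s (k / (d + 1))) (k % (d + 1))

lemma step_arith {k q r : ℕ} (hq : q = k / (d+1)) (hr : r = k % (d+1)) (h : r < d) :
    (k+1) / (d+1) = q ∧ (k+1) % (d+1) = r + 1 := by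
  subst hq hr
  have hk := Nat.div_add_mod k (d+1)
  have hk1 : k + 1 = (d+1) * (k / (d+1)) + (k % (d+1) + 1) := by omega
  constructor
  · have h2 : (k % (d+1) + 1) / (d+1) = 0 := Nat.div_eq_of_lt (by omega)
    rw [hk1, Nat.mul_add_div (by omega), h2]
    omega
  · rw [hk1, Nat.mul_add_mod, Nat.mod_eq_of_lt (by omega)]

lemma step_arith_end {k q r : ℕ} (hq : q = k / (d+1)) (hr : r = k % (d+1)) (h : r = d) :
    (k+1) / (d+1) = q + 1 ∧ (k+1) % (d+1) = 0 := by
  subst hq hr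
  have hk := Nat.div_add_mod k (d+1)
  have hk1 : k + 1 = (d+1) * (k / (d+1) + 1) := by
    rw [Nat.mul_add, Nat.mul_one]; omega
  constructor
  · rw [hk1, Nat.mul_div_cancel_left _ (by omega)]
  · rw [hk1, Nat.mul_mod_right]

lemma take_eq_self {σ : S} (hlen : ∀ σ, (c σ).length = ℓ σ) :
    (c σ).take (ℓ σ) = c σ := by
  rw [← hlen σ, List.take_length]

lemma segTraj_zero (σ : S) : segTraj c ℓ σ 0 = .inl [] := by
  simp [segTraj]

lemma traj_edge (hlen : ∀ σ, (c σ).length = ℓ σ) (hd : ∀ σ, ℓ σ ≤ d)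
    (s : ℕ → S) (k : ℕ) :
    GEdge c ℓ d (traj c ℓ d s k) (traj c ℓ d s (k+1)) := by
  set q := k / (d+1) with hq
  set r := k % (d+1) with hr
  have hrd : r < d + 1 := Nat.mod_lt _ (by omega)
  set σ := s q with hσ
  rcases lt_trichotomy r (ℓ σ) with h1 | h1 | h1
  · -- internal step
    have hrlt : r < d := lt_of_lt_of_le h1 (hd σ)
    obtain ⟨e1, e2⟩ := step_arith hq hr hrlt
    have t1 : traj c ℓ d s k = .inl ((c σ).take r) := by
      rw [traj, ← hq, ← hr, ← hσ, segTraj, if_pos (le_of_lt h1)]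
    have t2 : traj c ℓ d s (k+1) = .inl ((c σ).take (r+1)) := by
      rw [traj, e1, e2, ← hσ, segTraj, if_pos (by omega)]
    rw [t1, t2]
    have hrl : r < (c σ).length := by rw [hlen]; exact h1
    have htc : (c σ).take r ++ [(c σ).get ⟨r, hrl⟩] = (c σ).take (r+1) := by
      simpa [List.concat_eq_append] using List.take_concat_get (c σ) r hrl
    exact Or.inl ⟨(c σ).get ⟨r, hrl⟩, htc.symm, σ, List.take_prefix _ _⟩
  · -- at the leaf
    have t1 : traj c ℓ d s k = .inl (c σ) := by
      rw [traj, ← hq, ← hr, ← hσ, segTraj, if_pos h1.le, h1, take_eq_self hlen]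
    by_cases h2 : r = d
    · obtain ⟨e1, e2⟩ := step_arith_end hq hr h2
      have t2 : traj c ℓ d s (k+1) = .inl [] := by
        rw [traj, e1, e2, segTraj, if_pos (by omega)]; simp
      rw [t1, t2]
      exact Or.inr ⟨rfl, σ, rfl, by omega⟩
    · have hrlt : r < d := by omega
      obtain ⟨e1, e2⟩ := step_arith hq hr hrlt
      have t2 : traj c ℓ d s (k+1) = .inr (σ, 1) := by
        rw [traj, e1, e2, ← hσ, segTraj]
        rw [if_neg (show ¬ (r + 1 ≤ ℓ σ) by omega)]
        have e3 : r + 1 - ℓ σ = 1 := by omega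
        rw [e3]
      rw [t1, t2]
      exact ⟨rfl, rfl, by omega⟩
  · -- on the return path
    have t1 : traj c ℓ d s k = .inr (σ, r - ℓ σ) := by
      rw [traj, ← hq, ← hr, ← hσ, segTraj, if_neg (by omega)]
    by_cases h2 : r = d
    · obtain ⟨e1, e2⟩ := step_arith_end hq hr h2
      have t2 : traj c ℓ d s (k+1) = .inl [] := by
        rw [traj, e1, e2, segTraj, if_pos (by omega)]; simp
      rw [t1, t2]
      exact ⟨rfl, by omega, by omega⟩
    · have hrlt : r < d := by omega
      obtain ⟨e1, e2⟩ := step_arith hq hr hrlt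
      have t2 : traj c ℓ d s (k+1) = .inr (σ, (r - ℓ σ) + 1) := by
        rw [traj, e1, e2, ← hσ, segTraj]
        rw [if_neg (show ¬ (r + 1 ≤ ℓ σ) by omega)]
        have e3 : r + 1 - ℓ σ = (r - ℓ σ) + 1 := by omega
        rw [e3]
      rw [t1, t2]
      exact ⟨rfl, rfl, by omega, by omega⟩

lemma traj_outdeg (hμ : ∀ σ, μ σ = ((2:ℝ) ^ ℓ σ)⁻¹) (hlen : ∀ σ, (c σ).length = ℓ σ)
    (hcinj : Function.Injective c) (hpf : ∀ σ τ, σ ≠ τ → ¬(c σ <+: c τ))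
    (hd : ∀ σ, ℓ σ ≤ d) (hsum : ∑ σ : S, μ σ = 1) (s : ℕ → S) (k : ℕ) :
    ((outdeg c ℓ d (traj c ℓ d s k) : ℝ))⁻¹
      = if k % (d+1) < ℓ (s (k / (d+1))) then (2:ℝ)⁻¹ else 1 := by
  set q := k / (d+1) with hq
  set r := k % (d+1) with hr
  have hrd : r < d + 1 := Nat.mod_lt _ (by omega)
  set σ := s q with hσ
  rcases lt_trichotomy r (ℓ σ) with h1 | h1 | h1
  · have t1 : traj c ℓ d s k = .inl ((c σ).take r) := by
      rw [traj, ← hq, ← hr, ← hσ, segTraj, if_pos (le_of_lt h1)]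
    rw [t1, if_pos h1,
      outdeg_internal hμ hlen hcinj hpf hd hsum (List.take_prefix r (c σ))
        (by rw [List.length_take, hlen]; omega)]
    norm_num
  · have t1 : traj c ℓ d s k = .inl (c σ) := by
      rw [traj, ← hq, ← hr, ← hσ, segTraj, if_pos h1.le, h1, take_eq_self hlen]
    rw [t1, if_neg (by omega), outdeg_leaf hd hcinj hlen hpf σ]
    norm_num
  · have t1 : traj c ℓ d s k = .inr (σ, r - ℓ σ) := by
      rw [traj, ← hq, ← hr, ← hσ, segTraj, if_neg (by omega)]
    rw [t1, if_neg (by omega), outdeg_ret (by omega) (by omega)]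
    norm_num



end Traj

section ProdCalc

lemma prod_ite_lt (a : ℝ) (L M : ℕ) :
    ∏ r ∈ Finset.range M, (if r < L then a else 1) = a ^ (min L M) := by
  induction M with
  | zero => simp
  | succ M ih =>
    rw [Finset.prod_range_succ, ih]
    by_cases h : M < L
    · rw [if_pos h, min_eq_right (by omega), min_eq_right (by omega), pow_succ]
    · rw [if_neg h, min_eq_left (by omega), min_eq_left (by omega), mul_one]

lemma prod_fin_ite_lt (a : ℝ) (L d : ℕ) (hL : L ≤ d) :
    ∏ r : Fin (d+1), (if r.val < L then a else 1) = a ^ L := by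
  rw [Fin.prod_univ_eq_prod_range (fun r => if r < L then a else 1) (d+1),
    prod_ite_lt, min_eq_left (by omega)]

end ProdCalc


section Main
variable {S : Type*} [Fintype S] [Nonempty S] {μ : S → ℝ} {c : S → List Bool} {ℓ : S → ℕ} {d : ℕ}

lemma walkProb_traj (hμ : ∀ σ, μ σ = ((2:ℝ) ^ ℓ σ)⁻¹) (hlen : ∀ σ, (c σ).length = ℓ σ)
    (hcinj : Function.Injective c) (hpf : ∀ σ τ, σ ≠ τ → ¬(c σ <+: c τ))
    (hd : ∀ σ, ℓ σ ≤ d) (hsum : ∑ σ : S, μ σ = 1) (n : ℕ) (s : ℕ → S) :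
    walkProb c ℓ d (m := n * (d+1)) (fun i => traj c ℓ d s i.val)
      = ∏ q : Fin n, μ (s q.val) := by
  unfold walkProb
  have hstep : ∀ i : Fin (n * (d+1)),
      (if GEdge c ℓ d (traj c ℓ d s i.castSucc.val) (traj c ℓ d s i.succ.val)
        then ((outdeg c ℓ d (traj c ℓ d s i.castSucc.val) : ℝ))⁻¹ else 0)
      = if i.val % (d+1) < ℓ (s (i.val / (d+1))) then (2:ℝ)⁻¹ else 1 := by
    intro i
    rw [Fin.coe_castSucc, Fin.val_succ, if_pos (traj_edge hlen hd s i.val),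
      traj_outdeg hμ hlen hcinj hpf hd hsum s i.val]
  rw [Finset.prod_congr rfl (fun i _ => hstep i)]
  rw [← Equiv.prod_comp finProdFinEquiv
    (fun k : Fin (n * (d+1)) => if k.val % (d+1) < ℓ (s (k.val / (d+1))) then (2:ℝ)⁻¹ else 1)]
  rw [Fintype.prod_prod_type]
  refine Finset.prod_congr rfl fun q _ => ?_
  have hval : ∀ r : Fin (d+1), ((finProdFinEquiv (q, r) : Fin (n*(d+1))) : ℕ) = r.val + (d+1) * q.val := by
    intro r; rfl
  have harith : ∀ r : Fin (d+1), (r.val + (d+1) * q.val) % (d+1) = r.val ∧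
      (r.val + (d+1) * q.val) / (d+1) = q.val := by
    intro r
    constructor
    · rw [Nat.add_mul_mod_self_left, Nat.mod_eq_of_lt r.isLt]
    · rw [Nat.add_mul_div_left _ _ (by omega), Nat.div_eq_of_lt r.isLt]; omega
  calc ∏ r : Fin (d+1), (if ((finProdFinEquiv (q, r) : Fin (n*(d+1))) : ℕ) % (d+1)
          < ℓ (s (((finProdFinEquiv (q, r) : Fin (n*(d+1))) : ℕ) / (d+1))) then (2:ℝ)⁻¹ else 1)
      = ∏ r : Fin (d+1), (if r.val < ℓ (s q.val) then (2:ℝ)⁻¹ else 1) := by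
        refine Finset.prod_congr rfl fun r _ => ?_
        rw [hval r, (harith r).1, (harith r).2]
    _ = ((2:ℝ)⁻¹) ^ (ℓ (s q.val)) := prod_fin_ite_lt _ _ _ (hd _)
    _ = μ (s q.val) := by rw [hμ, inv_pow]



lemma seg_exists (hlen : ∀ σ, (c σ).length = ℓ σ) (hcinj : Function.Injective c)
    (hpf : ∀ σ τ, σ ≠ τ → ¬(c σ <+: c τ)) (hd : ∀ σ, ℓ σ ≤ d)
    (g : ℕ → GVert S) (a : ℕ) (h0 : g a = .inl [])
    (hE : ∀ r, r < d + 1 → GEdge c ℓ d (g (a + r)) (g (a + r + 1))) :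
    ∃ σ : S, (∀ r, r ≤ d → g (a + r) = segTraj c ℓ σ r) ∧ g (a + d + 1) = .inl [] := by
  -- Step A: the shape of the walk within the segment
  have shape : ∀ r, r ≤ d →
      (∃ τ, r ≤ ℓ τ ∧ g (a + r) = .inl ((c τ).take r)) ∨
      (∃ τ, ℓ τ < r ∧ g (a + r) = .inr (τ, r - ℓ τ)) := by
    intro r
    induction r with
    | zero =>
      intro _
      exact Or.inl ⟨Classical.arbitrary S, Nat.zero_le _, by simpa using h0⟩
    | succ r ih =>
      intro hr1
      have edge := hE r (by omega)
      rcases ih (by omega) with ⟨τ, hrℓ, hg⟩ | ⟨τ, hℓr, hg⟩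
      · rw [hg] at edge
        have hplen : ((c τ).take r).length = r := by
          rw [List.length_take, hlen]; omega
        cases hw : g (a + r + 1) with
        | inl q =>
          rw [hw] at edge
          rcases edge with ⟨b, hb, ρ, hρ⟩ | ⟨rfl, ρ, hpc, hdℓ⟩
          · refine Or.inl ⟨ρ, ?_, ?_⟩
            · have : q.length = r + 1 := by rw [hb, List.length_append, hplen]; rfl
              have := hρ.length_le
              rw [hlen] at this; omega
            · congr 1
              have hq : q = (c ρ).take q.length := List.prefix_iff_eq_take.mp hρ
              have : q.length = r + 1 := by rw [hb, List.length_append, hplen]; rfl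
              rw [this] at hq
              exact hq
          · exfalso
            have h1 : (c ρ).length = r := by rw [← hpc, hplen]
            rw [hlen] at h1
            omega
        | inr x =>
          obtain ⟨ρ, j⟩ := x
          rw [hw] at edge
          obtain ⟨hpc, rfl, h1⟩ := edge
          have h2 : (c ρ).length = r := by rw [← hpc, hplen]
          rw [hlen] at h2
          refine Or.inr ⟨ρ, by omega, ?_⟩
          congr 2
          omega
      · rw [hg] at edge
        cases hw : g (a + r + 1) with
        | inl q =>
          rw [hw] at edge
          obtain ⟨rfl, h1, h2⟩ := edge
          exfalso
          have := hd τ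
          omega
        | inr x =>
          obtain ⟨ρ, j'⟩ := x
          rw [hw] at edge
          obtain ⟨e1, e2, h1, h2⟩ := edge
          subst e1
          refine Or.inr ⟨ρ, by omega, ?_⟩
          rw [e2]
          congr 2
          omega
  -- Step B: determine the symbol at the end of the segment, and the return to the root
  have hend : ∃ σ : S, g (a + d) = segTraj c ℓ σ d ∧ g (a + d + 1) = .inl [] := by
    have edge := hE d (by omega)
    rcases shape d le_rfl with ⟨τ, hdℓ, hg⟩ | ⟨τ, hℓd, hg⟩
    · have hτd : ℓ τ = d := le_antisymm (hd τ) hdℓ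
      have hgc : g (a + d) = .inl (c τ) := by
        rw [hg, ← hτd, take_eq_self hlen]
      refine ⟨τ, ?_, ?_⟩
      · rw [hgc, segTraj, if_pos hdℓ, ← hτd, take_eq_self hlen]
      · rw [hgc] at edge
        cases hw : g (a + d + 1) with
        | inl q =>
          rw [hw] at edge
          rcases edge with ⟨b, hb, ρ, hρ⟩ | ⟨rfl, -⟩
          · exfalso
            have hρτ : ρ ≠ τ := by
              intro e; subst e
              have := hρ.length_le
              rw [hb] at this
              simp at this
            have : c τ <+: c ρ := (List.prefix_append (c τ) [b]).trans (hb ▸ hρ)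
            exact hpf τ ρ (fun e => hρτ e.symm) this
          · rfl
        | inr x =>
          obtain ⟨ρ, j⟩ := x
          rw [hw] at edge
          obtain ⟨hpc, rfl, h1⟩ := edge
          have : ρ = τ := hcinj hpc.symm
          subst this
          omega
    · refine ⟨τ, ?_, ?_⟩
      · rw [hg, segTraj, if_neg (by omega)]
      · rw [hg] at edge
        cases hw : g (a + d + 1) with
        | inl q =>
          rw [hw] at edge
          obtain ⟨rfl, -, -⟩ := edge
          rfl
        | inr x =>
          obtain ⟨ρ, j'⟩ := x
          rw [hw] at edge
          obtain ⟨rfl, rfl, h1, h2⟩ := edge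
          omega
  obtain ⟨σ, hσd, hend'⟩ := hend
  -- Step C: backward determinism
  have hback : ∀ r, r < d → g (a + r + 1) = segTraj c ℓ σ (r + 1) →
      g (a + r) = segTraj c ℓ σ r := by
    intro r hr hnext
    have edge := hE r (by omega)
    rw [hnext] at edge
    by_cases hc : r + 1 ≤ ℓ σ
    · rw [segTraj, if_pos hc] at edge
      cases hv : g (a + r) with
      | inl p =>
        rw [hv] at edge
        rcases edge with ⟨b, hb, -⟩ | ⟨he, -⟩
        · have hrl : r < (c σ).length := by rw [hlen]; omega
          have htc : (c σ).take (r+1) = (c σ).take r ++ [(c σ).get ⟨r, hrl⟩] := by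
            simpa [List.concat_eq_append] using (List.take_concat_get (c σ) r hrl).symm
          rw [htc] at hb
          have hp : p = (c σ).take r := (List.append_inj' hb rfl).1.symm
          rw [segTraj, if_pos (by omega), ← hp]
        · exfalso
          have := congrArg List.length he
          rw [List.length_take, hlen] at this
          simp at this
          omega
      | inr x =>
        obtain ⟨ρ, j⟩ := x
        rw [hv] at edge
        obtain ⟨he, -⟩ := edge
        exfalso
        have := congrArg List.length he
        rw [List.length_take, hlen] at this
        simp at this
        omega
    · rw [segTraj, if_neg hc] at edge
      cases hv : g (a + r) with
      | inl p =>
        rw [hv] at edge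
        obtain ⟨rfl, h1, -⟩ := edge
        have : r = ℓ σ := by omega
        rw [segTraj, if_pos (by omega), this, take_eq_self hlen]
      | inr x =>
        obtain ⟨ρ, j⟩ := x
        rw [hv] at edge
        obtain ⟨rfl, h1, h2, -⟩ := edge
        rw [segTraj, if_neg (by omega)]
        congr 2
        omega
  have hdown : ∀ t, t ≤ d → g (a + (d - t)) = segTraj c ℓ σ (d - t) := by
    intro t
    induction t with
    | zero => intro _; simpa using hσd
    | succ t ih =>
      intro ht
      have e : d - t = (d - (t+1)) + 1 := by omega
      have h1 := ih (by omega)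
      rw [e] at h1
      exact hback _ (by omega) (by rw [show a + (d - (t+1)) + 1 = a + ((d - (t+1)) + 1) from rfl]; exact h1)
  refine ⟨σ, fun r hr => ?_, hend'⟩
  have := hdown (d - r) (by omega)
  rwa [show d - (d - r) = r by omega] at this


lemma walk_form (hlen : ∀ σ, (c σ).length = ℓ σ) (hcinj : Function.Injective c)
    (hpf : ∀ σ τ, σ ≠ τ → ¬(c σ <+: c τ)) (hd : ∀ σ, ℓ σ ≤ d)
    (n : ℕ) (g : ℕ → GVert S) (h0 : g 0 = .inl [])
    (hE : ∀ k, k < n * (d+1) → GEdge c ℓ d (g k) (g (k+1))) :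
    ∃ s : ℕ → S, ∀ k, k ≤ n * (d+1) → g k = traj c ℓ d s k := by
  induction n with
  | zero =>
    refine ⟨fun _ => Classical.arbitrary S, fun k hk => ?_⟩
    have : k = 0 := by omega
    subst this
    rw [h0, traj]
    simp [segTraj]
  | succ n ih =>
    have hmono : n * (d+1) ≤ (n+1) * (d+1) := Nat.mul_le_mul_right _ (by omega)
    have hsm : (n+1) * (d+1) = n * (d+1) + (d+1) := Nat.succ_mul _ _
    obtain ⟨s, hs⟩ := ih (fun k hk => hE k (by omega))
    set a := n * (d+1) with ha
    have hamod : a % (d+1) = 0 := by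
      rw [ha, Nat.mul_mod_left]
    have hadiv : ∀ r, r < d + 1 → (a + r) % (d+1) = r ∧ (a + r) / (d+1) = n := by
      intro r hr
      have e : a + r = (d+1) * n + r := by rw [ha, Nat.mul_comm]
      constructor
      · rw [e, Nat.mul_add_mod, Nat.mod_eq_of_lt hr]
      · rw [e, Nat.mul_add_div (by omega), Nat.div_eq_of_lt hr]; omega
    have hga : g a = .inl [] := by
      rw [hs a le_rfl, traj, hamod]
      simp [segTraj]
    obtain ⟨σ, hσ, hend⟩ := seg_exists hlen hcinj hpf hd g a hga
      (fun r hr => hE (a + r) (by omega))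
    refine ⟨Function.update s n σ, fun k hk => ?_⟩
    rcases lt_trichotomy k a with h | h | h
    · rw [hs k (le_of_lt h), traj, traj]
      have hq : k / (d+1) < n := (Nat.div_lt_iff_lt_mul (by omega)).mpr h
      rw [Function.update_of_ne (by omega)]
    · subst h
      rw [hga, traj, hamod]
      simp [segTraj]
    · have hr1 : k - a ≤ d + 1 := by omega
      have hk' : k = a + (k - a) := by omega
      set r := k - a with hrdef
      by_cases hrd : r ≤ d
      · rw [hk', hσ r hrd, traj, (hadiv r (by omega)).1, (hadiv r (by omega)).2,
          Function.update_self]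
      · have hke : k = a + d + 1 := by omega
        have hm0 : (a + d + 1) % (d+1) = 0 := by
          have e : a + d + 1 = (d+1) * (n+1) := by rw [ha]; ring
          rw [e, Nat.mul_mod_right]
        rw [hke, hend, traj, hm0]
        simp [segTraj]

lemma traj_inj (hlen : ∀ σ, (c σ).length = ℓ σ)
    (hpf : ∀ σ τ, σ ≠ τ → ¬(c σ <+: c τ)) (hd : ∀ σ, ℓ σ ≤ d)
    {s t : ℕ → S} {q : ℕ}
    (h : traj c ℓ d s (q*(d+1) + ℓ (s q)) = traj c ℓ d t (q*(d+1) + ℓ (s q))) :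
    s q = t q := by
  have harith : (q*(d+1) + ℓ (s q)) % (d+1) = ℓ (s q) ∧
      (q*(d+1) + ℓ (s q)) / (d+1) = q := by
    have e : q*(d+1) + ℓ (s q) = (d+1) * q + ℓ (s q) := by rw [Nat.mul_comm]
    have hlt : ℓ (s q) < d + 1 := by have := hd (s q); omega
    constructor
    · rw [e, Nat.mul_add_mod, Nat.mod_eq_of_lt hlt]
    · rw [e, Nat.mul_add_div (by omega), Nat.div_eq_of_lt hlt]; omega
  rw [traj, traj, harith.1, harith.2] at h
  rw [segTraj, segTraj, if_pos le_rfl, take_eq_self hlen] at h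
  by_cases hc : ℓ (s q) ≤ ℓ (t q)
  · rw [if_pos hc] at h
    rw [Sum.inl.injEq] at h
    by_contra hne
    refine hpf (s q) (t q) hne ?_
    rw [h]
    exact List.take_prefix _ _
  · rw [if_neg hc] at h
    exact absurd h (by simp)



end Main

section Ent
variable {S : Type*} [Fintype S] [Nonempty S] {μ : S → ℝ}

lemma sum_pi_succ (n : ℕ) (F : (Fin (n+1) → S) → ℝ) :
    ∑ s : Fin (n+1) → S, F s = ∑ a : S, ∑ t : Fin n → S, F (Fin.cons a t : Fin (n+1) → S) := by
  rw [← (Fin.consEquiv (fun _ : Fin (n+1) => S)).sum_comp F, Fintype.sum_prod_type]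
  rfl

lemma sum_prod_one (hsum : ∑ σ : S, μ σ = 1) (n : ℕ) :
    ∑ s : Fin n → S, ∏ i, μ (s i) = 1 := by
  induction n with
  | zero => simp
  | succ n ih =>
    rw [sum_pi_succ n (fun s => ∏ i, μ (s i))]
    have : ∀ (a : S) (t : Fin n → S),
        ∏ i : Fin (n+1), μ ((Fin.cons a t : Fin (n+1) → S) i) = μ a * ∏ i : Fin n, μ (t i) := by
      intro a t
      rw [Fin.prod_univ_succ]
      simp
    calc ∑ a : S, ∑ t : Fin n → S, ∏ i : Fin (n+1), μ ((Fin.cons a t : Fin (n+1) → S) i)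
        = ∑ a : S, ∑ t : Fin n → S, μ a * ∏ i : Fin n, μ (t i) := by
          exact Finset.sum_congr rfl fun a _ => Finset.sum_congr rfl fun t _ => this a t
      _ = ∑ a : S, μ a * ∑ t : Fin n → S, ∏ i : Fin n, μ (t i) := by
          exact Finset.sum_congr rfl fun a _ => (Finset.mul_sum _ _ _).symm
      _ = 1 := by rw [ih] ; simpa using hsum

lemma ent_sum (hpos : ∀ σ, 0 < μ σ) (hsum : ∑ σ : S, μ σ = 1) (n : ℕ) :
    ∑ s : Fin n → S, (∏ i, μ (s i)) * Real.logb 2 (∏ i, μ (s i))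
      = n * ∑ σ : S, μ σ * Real.logb 2 (μ σ) := by
  induction n with
  | zero => simp
  | succ n ih =>
    have hPpos : ∀ t : Fin n → S, 0 < ∏ i, μ (t i) :=
      fun t => Finset.prod_pos fun i _ => hpos _
    rw [sum_pi_succ n (fun s => (∏ i, μ (s i)) * Real.logb 2 (∏ i, μ (s i)))]
    have hc : ∀ (a : S) (t : Fin n → S),
        ∏ i : Fin (n+1), μ ((Fin.cons a t : Fin (n+1) → S) i) = μ a * ∏ i : Fin n, μ (t i) := by
      intro a t
      rw [Fin.prod_univ_succ]
      simp
    have hterm : ∀ (a : S) (t : Fin n → S),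
        (∏ i : Fin (n+1), μ ((Fin.cons a t : Fin (n+1) → S) i)) *
            Real.logb 2 (∏ i : Fin (n+1), μ ((Fin.cons a t : Fin (n+1) → S) i))
        = (μ a * Real.logb 2 (μ a)) * (∏ i, μ (t i))
            + μ a * ((∏ i, μ (t i)) * Real.logb 2 (∏ i, μ (t i))) := by
      intro a t
      rw [hc a t, Real.logb_mul (ne_of_gt (hpos a)) (ne_of_gt (hPpos t))]
      ring
    calc ∑ a : S, ∑ t : Fin n → S, (∏ i : Fin (n+1), μ ((Fin.cons a t : Fin (n+1) → S) i)) *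
            Real.logb 2 (∏ i : Fin (n+1), μ ((Fin.cons a t : Fin (n+1) → S) i))
        = ∑ a : S, ((μ a * Real.logb 2 (μ a)) * ∑ t : Fin n → S, (∏ i, μ (t i))
            + μ a * ∑ t : Fin n → S, ((∏ i, μ (t i)) * Real.logb 2 (∏ i, μ (t i)))) := by
          refine Finset.sum_congr rfl fun a _ => ?_
          rw [Finset.sum_congr rfl fun t _ => hterm a t, Finset.sum_add_distrib,
            ← Finset.mul_sum, ← Finset.mul_sum]
      _ = ∑ a : S, (μ a * Real.logb 2 (μ a) + μ a * (n * ∑ σ : S, μ σ * Real.logb 2 (μ σ))) := by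
          refine Finset.sum_congr rfl fun a _ => ?_
          rw [sum_prod_one hsum n, ih, mul_one]
      _ = (n + 1 : ℕ) * ∑ σ : S, μ σ * Real.logb 2 (μ σ) := by
          rw [Finset.sum_add_distrib, ← Finset.sum_mul, hsum]
          push_cast
          ring
end Ent


/-- The Shannon entropy (base 2) of a uniform random walk of length `n(d+1)` on `G_μ`
starting at the root equals exactly `n · H(μ)` where `H(μ) = Σ_σ μ(σ) log₂(1/μ(σ))`. -/
theorem stmt13 {S : Type*} [Fintype S] [Nonempty S] (μ : S → ℝ) (ℓ : S → ℕ)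
    (hℓ : ∀ σ, 1 ≤ ℓ σ) (hμ : ∀ σ, μ σ = ((2 : ℝ) ^ ℓ σ)⁻¹) (hsum : ∑ σ : S, μ σ = 1)
    (c : S → List Bool) (hcinj : Function.Injective c) (hlen : ∀ σ, (c σ).length = ℓ σ)
    (hpf : ∀ σ τ, σ ≠ τ → ¬(c σ <+: c τ))
    (d : ℕ) (hd : ∀ σ, ℓ σ ≤ d) (hd' : ∃ σ, ℓ σ = d)
    (n : ℕ) (hn : 1 ≤ n) (m : ℕ) (hm : m = n * (d + 1)) :
    (-∑' f : Fin (m + 1) → GVert S,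
        (if f 0 = Sum.inl ([] : List Bool) then walkProb c ℓ d f else 0) *
          Real.logb 2 (if f 0 = Sum.inl ([] : List Bool) then walkProb c ℓ d f else 0))
      = (n : ℝ) * ∑ σ : S, μ σ * Real.logb 2 (μ σ)⁻¹ := by
  subst hm
  have hpos : ∀ σ, 0 < μ σ := fun σ => by rw [hμ σ]; positivity
  -- the trajectory map
  set m := n * (d + 1) with hm
  let ext : (Fin n → S) → ℕ → S :=
    fun s q => if h : q < n then s ⟨q, h⟩ else Classical.arbitrary S
  let T : (Fin n → S) → (Fin (m + 1) → GVert S) :=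
    fun s i => traj c ℓ d (ext s) i.val
  have hT0 : ∀ s, T s 0 = Sum.inl ([] : List Bool) := by
    intro s
    show traj c ℓ d (ext s) (0 : Fin (m+1)).val = _
    rw [Fin.val_zero, traj, Nat.zero_mod]
    simp [segTraj]
  have hTprob : ∀ s : Fin n → S, walkProb c ℓ d (T s) = ∏ q : Fin n, μ (s q) := by
    intro s
    have := walkProb_traj hμ hlen hcinj hpf hd hsum n (ext s)
    refine this.trans ?_
    refine Finset.prod_congr rfl fun q _ => ?_
    have : ext s q.val = s q := by
      simp only [ext, dif_pos q.isLt, Fin.eta]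
    rw [this]
  have hkbound : ∀ (s : Fin n → S) (q : Fin n),
      q.val * (d+1) + ℓ (ext s q.val) < m + 1 := by
    intro s q
    have h1 : (q.val + 1) * (d+1) ≤ n * (d+1) := Nat.mul_le_mul_right _ q.isLt
    have h2 : (q.val + 1) * (d+1) = q.val * (d+1) + (d+1) := Nat.succ_mul _ _
    have h3 := hd (ext s q.val)
    omega
  have hTinj : ∀ s t : Fin n → S, T s = T t → s = t := by
    intro s t h
    funext q
    have hk := hkbound s q
    have hkey := congrFun h ⟨q.val * (d+1) + ℓ (ext s q.val), hk⟩
    have := traj_inj hlen hpf hd (s := ext s) (t := ext t) (q := q.val) hkey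
    simpa only [ext, dif_pos q.isLt, Fin.eta] using this
  -- support characterization
  have hsupp : ∀ f : Fin (m + 1) → GVert S,
      (if f 0 = Sum.inl ([] : List Bool) then walkProb c ℓ d f else 0) *
        Real.logb 2 (if f 0 = Sum.inl ([] : List Bool) then walkProb c ℓ d f else 0) ≠ 0 →
      ∃ s : Fin n → S, f = T s := by
    intro f hf
    have hf0 : f 0 = Sum.inl ([] : List Bool) := by
      by_contra h
      apply hf
      rw [if_neg h]
      simp
    have hwp : walkProb c ℓ d f ≠ 0 := by
      intro h
      apply hf
      rw [if_pos hf0, h]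
      simp
    have hedges : ∀ i : Fin m, GEdge c ℓ d (f i.castSucc) (f i.succ) := by
      intro i
      by_contra h
      exact hwp (Finset.prod_eq_zero (Finset.mem_univ i) (by rw [if_neg h]))
    let g : ℕ → GVert S := fun k => if h : k < m + 1 then f ⟨k, h⟩ else Sum.inl []
    have hg : ∀ (k : ℕ) (h : k < m + 1), g k = f ⟨k, h⟩ := by
      intro k h; simp only [g, dif_pos h]
    have hg0 : g 0 = Sum.inl ([] : List Bool) := by
      rw [hg 0 (by omega)]
      rw [show (⟨0, by omega⟩ : Fin (m+1)) = 0 from rfl]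
      exact hf0
    have hgE : ∀ k, k < n * (d+1) → GEdge c ℓ d (g k) (g (k+1)) := by
      intro k hk
      rw [hg k (by omega), hg (k+1) (by omega)]
      have := hedges ⟨k, hk⟩
      have e1 : (⟨k, by omega⟩ : Fin (m+1)) = (⟨k, hk⟩ : Fin m).castSucc := rfl
      have e2 : (⟨k+1, by omega⟩ : Fin (m+1)) = (⟨k, hk⟩ : Fin m).succ := rfl
      rw [e1, e2]
      exact this
    obtain ⟨s, hs⟩ := walk_form hlen hcinj hpf hd n g hg0 hgE
    refine ⟨fun q : Fin n => s q.val, ?_⟩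
    funext i
    have h1 : f i = g i.val := by rw [hg i.val i.isLt, Fin.eta]
    rw [h1, hs i.val (by omega)]
    show traj c ℓ d s i.val = traj c ℓ d (ext fun q : Fin n => s q.val) i.val
    by_cases hq : i.val / (d+1) < n
    · rw [traj, traj]
      congr 1
      simp only [ext, dif_pos hq]
    · have him : i.val = m := by
        have h2 : n * (d+1) ≤ i.val := by
          by_contra h3
          exact hq ((Nat.div_lt_iff_lt_mul (by omega)).mpr (by omega))
        have := i.isLt
        omega
      have hmod : i.val % (d+1) = 0 := by
        rw [him, hm, Nat.mul_mod_left]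
      rw [traj, traj, hmod]
      simp [segTraj]
  -- reduce the tsum to a finite sum over tuples
  set G : (Fin (m + 1) → GVert S) → ℝ := fun f =>
    (if f 0 = Sum.inl ([] : List Bool) then walkProb c ℓ d f else 0) *
      Real.logb 2 (if f 0 = Sum.inl ([] : List Bool) then walkProb c ℓ d f else 0) with hG
  have htsum : ∑' f : Fin (m + 1) → GVert S, G f = ∑ s : Fin n → S, G (T s) := by
    rw [tsum_eq_sum (s := Finset.image T Finset.univ) ?_]
    · exact Finset.sum_image fun s _ t _ h => hTinj s t h
    · intro f hf
      by_contra hG0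
      obtain ⟨s, rfl⟩ := hsupp f hG0
      exact hf (Finset.mem_image_of_mem T (Finset.mem_univ s))
  have hGT : ∀ s : Fin n → S,
      G (T s) = (∏ q : Fin n, μ (s q)) * Real.logb 2 (∏ q : Fin n, μ (s q)) := by
    intro s
    rw [hG]
    simp only [if_pos (hT0 s), hTprob s]
  show -∑' f : Fin (m + 1) → GVert S, G f = _
  rw [htsum, Finset.sum_congr rfl fun s _ => hGT s, ent_sum hpos hsum n]
  have hinv : ∑ σ : S, μ σ * Real.logb 2 (μ σ)⁻¹ = -∑ σ : S, μ σ * Real.logb 2 (μ σ) := by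
    rw [← Finset.sum_neg_distrib]
    exact Finset.sum_congr rfl fun σ _ => by rw [Real.logb_inv]; ring
  rw [hinv]
  ring
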